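/- Let β > 1 and let F_β be the class of functions on [0,1) defined from the Haar-type system as in the context. Then there is a constant C > 0, depending only on β, such that d_n(F_β) ≤ C · n^{−1/2} · (log n)^{−β} for all n ≥ 2, where the Kolmogorov widths are taken in L₂([0,1)) with Lebesgue measure. -/

import Mathlib

/-!
Keep the levels `ℓ < L = ⌊log₂ n⌋` of `f_c`: they involve `2^L - 1 ≤ n` indicators, whose
coefficients serve as the functionals. The indicators of level `ℓ` are disjoint of measure
`2^{-ℓ}`, so that level has `L₂`-norm at most `(ℓ+1)^{-β} 2^{-ℓ/2}`, and the discarded tail is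
dominated by a geometric series: it is `≲ (L+1)^{-β} 2^{-L/2} ≲ (log n)^{-β} n^{-1/2}`.
-/

open MeasureTheory ENNReal

noncomputable section

/-- The unit interval `[0,1)` as a subtype of `ℝ`. -/
abbrev UnitIco : Type := Set.Ico (0 : ℝ) 1

/-- Lebesgue measure on `[0,1)`. -/
def μ01 : Measure UnitIco := MeasureTheory.Measure.comap Subtype.val volume

/-- Kolmogorov widths in `L₂(μ)`. -/
def kolW {D : Type*} [MeasurableSpace D] (μ : Measure D)
    (F : Set (D → ℂ)) (k : ℕ) : ℝ≥0∞ :=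
  ⨅ (ℓ : Fin k → (D → ℂ) → ℂ) (φ : Fin k → D → ℂ) (_ : ∀ i, MemLp (φ i) 2 μ),
    ⨆ f ∈ F, eLpNorm (fun t => f t - ∑ i, ℓ i f * φ i t) 2 μ

/-- `χ ℓ k` is the indicator function of the dyadic interval
`I_{ℓ,k} = [(k−1) 2^{−ℓ}, k 2^{−ℓ}) ⊂ [0,1)`. -/
def dyadicChi (ℓ k : ℕ) : UnitIco → ℂ := fun x =>
  if ((k : ℝ) - 1) / 2 ^ ℓ ≤ (x : ℝ) ∧ (x : ℝ) < (k : ℝ) / 2 ^ ℓ then 1 else 0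

/-- The class `F_β`: all functions `f_c = ∑_{ℓ,k} c_{ℓ,k} χ_{ℓ,k}` with
`∑_{k=1}^{2^ℓ} |c_{ℓ,k}|² ≤ (ℓ+1)^{−2β}` for all `ℓ ∈ ℕ₀`. -/
def Fβ (β : ℝ) : Set (UnitIco → ℂ) :=
  { f | ∃ c : ℕ → ℕ → ℂ,
      (∀ ℓ : ℕ, ∑ k ∈ Finset.Icc 1 (2 ^ ℓ), ‖c ℓ k‖ ^ 2 ≤ ((ℓ : ℝ) + 1) ^ (-(2 * β))) ∧
      f = fun x => ∑' ℓ : ℕ, ∑ k ∈ Finset.Icc 1 (2 ^ ℓ), c ℓ k * dyadicChi ℓ k x }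

open Finset

lemma eLpNorm_tsum_le {α E : Type*} [MeasurableSpace α] {μ : Measure α} [NormedAddCommGroup E]
    {p : ℝ≥0∞} (hp : 1 ≤ p) {f : ℕ → α → E} (hf : ∀ j, AEStronglyMeasurable (f j) μ)
    (hs : ∀ᵐ x ∂μ, Summable fun j => f j x) :
    eLpNorm (fun x => ∑' j, f j x) p μ ≤ ∑' j, eLpNorm (f j) p μ := by
  refine Lp.eLpNorm_le_of_ae_tendsto (u := Filter.atTop) (f := fun m => ∑ j ∈ range m, f j)
    (Filter.Eventually.of_forall fun m => ?_)
    (fun m => Finset.aestronglyMeasurable_sum _ fun j _ => hf j)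
    (hs.mono fun x hx => by simpa only [Finset.sum_apply] using hx.hasSum.tendsto_sum_nat)
  exact (eLpNorm_sum_le (fun j _ => hf j) hp).trans (ENNReal.sum_le_tsum _)

lemma kolW_le_of_forall_eLpNorm_le {D ι : Type*} [MeasurableSpace D] [Fintype ι]
    {μ : Measure D} {F : Set (D → ℂ)} {k : ℕ} (hk : Fintype.card ι ≤ k)
    (a : ι → (D → ℂ) → ℂ) (φ : ι → D → ℂ) (hφ : ∀ i, MemLp (φ i) 2 μ) {ε : ℝ≥0∞}
    (hε : ∀ f ∈ F, eLpNorm (fun t => f t - ∑ i, a i f * φ i t) 2 μ ≤ ε) :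
    kolW μ F k ≤ ε := by
  classical
  obtain ⟨e⟩ : Nonempty (ι ↪ Fin k) := Function.Embedding.nonempty_of_card_le (by simpa using hk)
  have hsum : ∀ f t, ∑ j, Function.extend e a 0 j f * Function.extend e φ 0 j t =
      ∑ i, a i f * φ i t := fun f t =>
    (Fintype.sum_of_injective e e.injective _ _
      (fun j hj => by simp [Function.extend_apply' _ _ _ hj])
      (fun i => by simp only [e.injective.extend_apply])).symm
  refine iInf_le_of_le (Function.extend e a 0) <| iInf_le_of_le (Function.extend e φ 0) <|
    iInf_le_of_le (fun j => ?_) <| iSup₂_le fun f hf => ?_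
  · by_cases hj : ∃ i, e i = j
    · obtain ⟨i, rfl⟩ := hj
      simpa only [e.injective.extend_apply] using hφ i
    · rw [Function.extend_apply' _ _ _ hj]
      exact MemLp.zero
  · simpa only [hsum] using hε f hf

lemma sqrt_two_pow (n : ℕ) : √((2 : ℝ) ^ n) = √2 ^ n := by
  rw [← Real.sqrt_sq (by positivity : 0 ≤ √2 ^ n), ← pow_mul, mul_comm, pow_mul,
    Real.sq_sqrt zero_le_two]

lemma rpow_neg_log_two_succ_le {β : ℝ} (hβ : 0 ≤ β) {n : ℕ} (hn : 1 < n) :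
    ((Nat.log 2 n : ℝ) + 1) ^ (-β) ≤ Real.log 2 ^ β * Real.log n ^ (-β) := by
  have hlog2 : 0 < Real.log 2 := Real.log_pos one_lt_two
  have hlogn : 0 < Real.log n := Real.log_pos (by exact_mod_cast hn)
  have hlt : (n : ℝ) < 2 ^ (Nat.log 2 n + 1) := by
    exact_mod_cast Nat.lt_pow_succ_log_self one_lt_two n
  have hle : Real.log n / Real.log 2 ≤ (Nat.log 2 n : ℝ) + 1 := by
    rw [div_le_iff₀ hlog2]
    calc Real.log n ≤ Real.log (2 ^ (Nat.log 2 n + 1)) :=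
          Real.log_le_log (by positivity) hlt.le
      _ = ((Nat.log 2 n : ℝ) + 1) * Real.log 2 := by rw [Real.log_pow]; push_cast; ring
  calc ((Nat.log 2 n : ℝ) + 1) ^ (-β) ≤ (Real.log n / Real.log 2) ^ (-β) :=
        Real.rpow_le_rpow_of_nonpos (by positivity) hle (by linarith)
    _ = Real.log 2 ^ β * Real.log n ^ (-β) := by
        rw [Real.div_rpow hlogn.le hlog2.le, Real.rpow_neg hlog2.le, div_inv_eq_mul, mul_comm]

lemma inv_sqrt_two_pow_log_le {n : ℕ} (hn : n ≠ 0) :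
    (√2)⁻¹ ^ Nat.log 2 n ≤ √2 * (n : ℝ) ^ (-(1 / 2) : ℝ) := by
  have hn' : (0 : ℝ) < n := by positivity
  have hsqrt : √(n : ℝ) ≤ √2 * √2 ^ Nat.log 2 n := by
    rw [← pow_succ', ← sqrt_two_pow]
    exact Real.sqrt_le_sqrt (by exact_mod_cast (Nat.lt_pow_succ_log_self one_lt_two n).le)
  rw [Real.rpow_neg hn'.le, ← Real.sqrt_eq_rpow, inv_pow, ← div_eq_mul_inv,
    inv_le_iff_one_le_mul₀ (by positivity), div_mul_eq_mul_div, one_le_div₀ (by positivity)]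
  exact hsqrt

def dyadicIndex (ℓ : ℕ) (x : UnitIco) : ℕ := ⌊(x : ℝ) * 2 ^ ℓ⌋₊ + 1

lemma dyadicIndex_mem_Icc (ℓ : ℕ) (x : UnitIco) : dyadicIndex ℓ x ∈ Icc 1 (2 ^ ℓ) := by
  obtain ⟨hx0, hx1⟩ := x.2
  have hlt : ⌊(x : ℝ) * 2 ^ ℓ⌋₊ < 2 ^ ℓ := by
    rw [Nat.floor_lt (by positivity)]
    push_cast
    nlinarith [pow_pos (two_pos : (0 : ℝ) < 2) ℓ]
  rw [mem_Icc, dyadicIndex]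
  omega

lemma mem_Ico_iff_dyadicIndex_eq {ℓ k : ℕ} (hk : 1 ≤ k) (x : UnitIco) :
    (x : ℝ) ∈ Set.Ico (((k : ℝ) - 1) / 2 ^ ℓ) ((k : ℝ) / 2 ^ ℓ) ↔ dyadicIndex ℓ x = k := by
  have h2 : (0 : ℝ) < 2 ^ ℓ := by positivity
  have hfloor : dyadicIndex ℓ x = k ↔ ⌊(x : ℝ) * 2 ^ ℓ⌋₊ = k - 1 := by
    rw [dyadicIndex]; omega
  rw [hfloor, Nat.floor_eq_iff (by have := x.2.1; positivity), Set.mem_Ico,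
    div_le_iff₀ h2, lt_div_iff₀ h2, Nat.cast_sub hk]
  push_cast
  constructor <;> rintro ⟨h₁, h₂⟩ <;> constructor <;> linarith

lemma dyadicChi_eq_ite {ℓ k : ℕ} (hk : 1 ≤ k) (x : UnitIco) :
    dyadicChi ℓ k x = if dyadicIndex ℓ x = k then 1 else 0 := by
  simp only [dyadicChi, ← mem_Ico_iff_dyadicIndex_eq hk, Set.mem_Ico]

lemma measurable_dyadicIndex (ℓ : ℕ) : Measurable (dyadicIndex ℓ) :=
  ((measurable_subtype_coe.mul_const _).nat_floor).add_const 1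

lemma μ01_dyadicIndex_eq {ℓ k : ℕ} (hk : k ∈ Icc 1 (2 ^ ℓ)) :
    μ01 {x | dyadicIndex ℓ x = k} = ENNReal.ofReal (2 ^ ℓ)⁻¹ := by
  obtain ⟨hk1, hk2⟩ := mem_Icc.mp hk
  have h2 : (0 : ℝ) < 2 ^ ℓ := by positivity
  have hsub : Set.Ico (((k : ℝ) - 1) / 2 ^ ℓ) ((k : ℝ) / 2 ^ ℓ) ⊆ Set.Ico 0 1 := by
    have hk1' : (1 : ℝ) ≤ k := by exact_mod_cast hk1
    have hk2' : (k : ℝ) ≤ 2 ^ ℓ := by exact_mod_cast hk2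
    exact Set.Ico_subset_Ico (by positivity) ((div_le_one h2).mpr hk2')
  have hpre : {x | dyadicIndex ℓ x = k} =
      Subtype.val ⁻¹' Set.Ico (((k : ℝ) - 1) / 2 ^ ℓ) ((k : ℝ) / 2 ^ ℓ) := by
    ext x
    exact (mem_Ico_iff_dyadicIndex_eq hk1 x).symm
  rw [hpre, μ01, (MeasurableEmbedding.subtype_coe measurableSet_Ico).comap_apply,
    Subtype.image_preimage_coe, Set.inter_eq_right.mpr hsub, Real.volume_Ico]
  congr 1
  field_simp
  ring

instance : IsFiniteMeasure μ01 := by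
  refine ⟨?_⟩
  rw [μ01, (MeasurableEmbedding.subtype_coe measurableSet_Ico).comap_apply,
    Subtype.coe_image_univ, Real.volume_Ico]
  exact ENNReal.ofReal_lt_top

lemma memLp_dyadicChi (ℓ k : ℕ) {p : ℝ≥0∞} : MemLp (dyadicChi ℓ k) p μ01 := by
  have hmeas : Measurable (dyadicChi ℓ k) :=
    Measurable.ite (measurable_subtype_coe measurableSet_Ico) measurable_const measurable_const
  refine MemLp.of_bound hmeas.aestronglyMeasurable 1 (Filter.Eventually.of_forall fun x => ?_)
  unfold dyadicChi
  split_ifs <;> simp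

def dyadicBlock (ℓ : ℕ) (c : ℕ → ℂ) : UnitIco → ℂ :=
  fun x => ∑ k ∈ Icc 1 (2 ^ ℓ), c k * dyadicChi ℓ k x

lemma dyadicBlock_apply (ℓ : ℕ) (c : ℕ → ℂ) (x : UnitIco) :
    dyadicBlock ℓ c x = c (dyadicIndex ℓ x) := by
  rw [dyadicBlock, sum_congr rfl fun k hk => by rw [dyadicChi_eq_ite (mem_Icc.mp hk).1 x]]
  simp only [mul_ite, mul_one, mul_zero]
  rw [sum_ite_eq, if_pos (dyadicIndex_mem_Icc ℓ x)]

lemma measurableSet_dyadicIndex_eq (ℓ k : ℕ) : MeasurableSet {x | dyadicIndex ℓ x = k} :=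
  measurable_dyadicIndex ℓ (measurableSet_singleton k)

lemma measurable_dyadicBlock (ℓ : ℕ) (c : ℕ → ℂ) : Measurable (dyadicBlock ℓ c) := by
  simp only [funext (dyadicBlock_apply ℓ c)]
  exact measurable_from_nat.comp (measurable_dyadicIndex ℓ)

lemma norm_dyadicBlock_le (ℓ : ℕ) (c : ℕ → ℂ) (x : UnitIco) :
    ‖dyadicBlock ℓ c x‖ ≤ √(∑ k ∈ Icc 1 (2 ^ ℓ), ‖c k‖ ^ 2) := by
  rw [dyadicBlock_apply]
  exact Real.le_sqrt_of_sq_le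
    (single_le_sum (fun k _ => sq_nonneg ‖c k‖) (dyadicIndex_mem_Icc ℓ x))

lemma lintegral_enorm_dyadicBlock_sq (ℓ : ℕ) (c : ℕ → ℂ) :
    ∫⁻ x, ‖dyadicBlock ℓ c x‖ₑ ^ (2 : ℝ) ∂μ01 =
      ENNReal.ofReal ((∑ k ∈ Icc 1 (2 ^ ℓ), ‖c k‖ ^ 2) / 2 ^ ℓ) := by
  have hsplit : ∀ x, ‖dyadicBlock ℓ c x‖ₑ ^ (2 : ℝ) =
      ∑ k ∈ Icc 1 (2 ^ ℓ), {x | dyadicIndex ℓ x = k}.indicator (fun _ => ‖c k‖ₑ ^ (2 : ℝ)) x := by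
    intro x
    simp only [Set.indicator_apply, Set.mem_ofPred_eq, dyadicBlock_apply]
    rw [sum_ite_eq, if_pos (dyadicIndex_mem_Icc ℓ x)]
  simp_rw [hsplit]
  rw [lintegral_finsetSum _ fun k _ =>
      measurable_const.indicator (measurableSet_dyadicIndex_eq ℓ k),
    sum_congr rfl fun k hk => by
      rw [lintegral_indicator_const (measurableSet_dyadicIndex_eq ℓ k), μ01_dyadicIndex_eq hk],
    div_eq_mul_inv, sum_mul, ENNReal.ofReal_sum_of_nonneg fun k _ => by positivity]
  refine sum_congr rfl fun k _ => ?_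
  rw [ENNReal.ofReal_mul (sq_nonneg _), ← ofReal_norm, ENNReal.ofReal_rpow_of_nonneg
    (norm_nonneg _) zero_le_two, Real.rpow_two]

lemma eLpNorm_dyadicBlock (ℓ : ℕ) (c : ℕ → ℂ) :
    eLpNorm (dyadicBlock ℓ c) 2 μ01 =
      ENNReal.ofReal √((∑ k ∈ Icc 1 (2 ^ ℓ), ‖c k‖ ^ 2) / 2 ^ ℓ) := by
  rw [eLpNorm_eq_lintegral_rpow_enorm_toReal two_ne_zero ENNReal.ofNat_ne_top,
    ENNReal.toReal_ofNat, lintegral_enorm_dyadicBlock_sq, Real.sqrt_eq_rpow,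
    ENNReal.ofReal_rpow_of_nonneg (by positivity) (by norm_num), one_div]

def dyadicPairs (L : ℕ) : Finset (Σ _ : ℕ, ℕ) := (range L).sigma fun ℓ => Icc 1 (2 ^ ℓ)

lemma card_dyadicPairs_lt (L : ℕ) : #(dyadicPairs L) < 2 ^ L := by
  rw [dyadicPairs, card_sigma]
  simp only [Nat.card_Icc, add_tsub_cancel_right, Nat.geomSum_eq le_rfl]
  have := Nat.two_pow_pos L
  omega

section AdmissibleCoefficients

variable {β : ℝ} {c : ℕ → ℕ → ℂ}
  (hc : ∀ ℓ : ℕ, ∑ k ∈ Icc 1 (2 ^ ℓ), ‖c ℓ k‖ ^ 2 ≤ ((ℓ : ℝ) + 1) ^ (-(2 * β)))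
include hc

lemma sqrt_sum_sq_le_rpow_neg (ℓ : ℕ) :
    √(∑ k ∈ Icc 1 (2 ^ ℓ), ‖c ℓ k‖ ^ 2) ≤ ((ℓ : ℝ) + 1) ^ (-β) := by
  rw [Real.sqrt_le_iff, ← Real.rpow_natCast, ← Real.rpow_mul (by positivity)]
  refine ⟨by positivity, (hc ℓ).trans_eq ?_⟩
  ring_nf

lemma summable_dyadicBlock (hβ : 1 < β) (x : UnitIco) :
    Summable fun ℓ => dyadicBlock ℓ (c ℓ) x := by
  have hmajor : Summable fun ℓ : ℕ => ((ℓ : ℝ) + 1) ^ (-β) := by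
    simpa using (summable_nat_add_iff 1).mpr (Real.summable_nat_rpow.mpr (by linarith))
  exact hmajor.of_norm_bounded fun ℓ =>
    (norm_dyadicBlock_le ℓ (c ℓ) x).trans (sqrt_sum_sq_le_rpow_neg hc ℓ)

lemma eLpNorm_dyadicBlock_le (ℓ : ℕ) :
    eLpNorm (dyadicBlock ℓ (c ℓ)) 2 μ01 ≤ ENNReal.ofReal (((ℓ : ℝ) + 1) ^ (-β) * (√2)⁻¹ ^ ℓ) := by
  rw [eLpNorm_dyadicBlock, Real.sqrt_div' _ (by positivity), sqrt_two_pow, inv_pow,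
    ← div_eq_mul_inv]
  exact ENNReal.ofReal_le_ofReal
    (div_le_div_of_nonneg_right (sqrt_sum_sq_le_rpow_neg hc ℓ) (by positivity))

lemma eLpNorm_tsum_dyadicBlock_le (hβ : 1 < β) (L : ℕ) :
    eLpNorm (fun x => ∑' j, dyadicBlock (j + L) (c (j + L)) x) 2 μ01 ≤
      ENNReal.ofReal (((L : ℝ) + 1) ^ (-β) * (√2)⁻¹ ^ L / (1 - (√2)⁻¹)) := by
  set r : ℝ := (√2)⁻¹
  have hr0 : 0 ≤ r := by positivity
  have hr1 : r < 1 := inv_lt_one_of_one_lt₀ Real.one_lt_sqrt_two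
  have hterm (j : ℕ) : (((j + L : ℕ) : ℝ) + 1) ^ (-β) * r ^ (j + L) ≤
      ((L : ℝ) + 1) ^ (-β) * r ^ L * r ^ j := by
    have hdecay : (((j + L : ℕ) : ℝ) + 1) ^ (-β) ≤ ((L : ℝ) + 1) ^ (-β) :=
      Real.rpow_le_rpow_of_nonpos (by positivity) (by push_cast; linarith) (by linarith)
    calc (((j + L : ℕ) : ℝ) + 1) ^ (-β) * r ^ (j + L)
        ≤ ((L : ℝ) + 1) ^ (-β) * r ^ (j + L) := by gcongr
      _ = ((L : ℝ) + 1) ^ (-β) * r ^ L * r ^ j := by ring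
  calc eLpNorm (fun x => ∑' j, dyadicBlock (j + L) (c (j + L)) x) 2 μ01
      ≤ ∑' j, eLpNorm (dyadicBlock (j + L) (c (j + L))) 2 μ01 :=
        eLpNorm_tsum_le one_le_two (fun j => (measurable_dyadicBlock _ _).aestronglyMeasurable)
          (Filter.Eventually.of_forall fun x =>
            (summable_nat_add_iff (f := fun ℓ => dyadicBlock ℓ (c ℓ) x) L).mpr
              (summable_dyadicBlock hc hβ x))
    _ ≤ ∑' j, ENNReal.ofReal (((L : ℝ) + 1) ^ (-β) * r ^ L * r ^ j) :=
        ENNReal.tsum_le_tsum fun j => (eLpNorm_dyadicBlock_le hc (j + L)).trans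
          (ENNReal.ofReal_le_ofReal (by exact_mod_cast hterm j))
    _ = ENNReal.ofReal (((L : ℝ) + 1) ^ (-β) * r ^ L / (1 - r)) := by
        rw [← ENNReal.ofReal_tsum_of_nonneg (fun j => by positivity)
          ((summable_geometric_of_lt_one hr0 hr1).mul_left _), tsum_mul_left,
          tsum_geometric_of_lt_one hr0 hr1, div_eq_mul_inv]

lemma tsum_sub_sum_dyadicPairs (hβ : 1 < β) (L : ℕ) (t : UnitIco) :
    ∑' ℓ, dyadicBlock ℓ (c ℓ) t - ∑ i : dyadicPairs L, c i.1.1 i.1.2 * dyadicChi i.1.1 i.1.2 t =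
      ∑' j, dyadicBlock (j + L) (c (j + L)) t := by
  rw [sum_coe_sort _ (fun i : Σ _ : ℕ, ℕ => c i.1 i.2 * dyadicChi i.1 i.2 t), dyadicPairs,
    sum_sigma, ← (summable_dyadicBlock hc hβ t).sum_add_tsum_nat_add L]
  exact add_sub_cancel_left _ _

end AdmissibleCoefficients

theorem statement14 (β : ℝ) (hβ : 1 < β) :
    ∃ C : ℝ, 0 < C ∧
      ∀ n : ℕ, 2 ≤ n →
        kolW μ01 (Fβ β) n ≤
          ENNReal.ofReal (C * (n : ℝ) ^ (-(1 / 2) : ℝ) * Real.log n ^ (-β)) := by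
  have hr : 0 < 1 - (√2)⁻¹ := sub_pos.mpr (inv_lt_one_of_one_lt₀ Real.one_lt_sqrt_two)
  refine ⟨√2 * Real.log 2 ^ β / (1 - (√2)⁻¹), by positivity, fun n hn => ?_⟩
  set L := Nat.log 2 n
  -- The widths allow arbitrary functionals, so any choice of coefficients for `f` will do.
  choose! c hc hfc using fun f (hf : f ∈ Fβ β) => hf
  have hcard : Fintype.card (dyadicPairs L) ≤ n := by
    rw [Fintype.card_coe]
    exact (card_dyadicPairs_lt L).le.trans (Nat.pow_log_le_self 2 (by omega))
  refine kolW_le_of_forall_eLpNorm_le hcard (fun i f => c f i.1.1 i.1.2)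
    (fun i => dyadicChi i.1.1 i.1.2) (fun i => memLp_dyadicChi _ _) fun f hf => ?_
  have htail : (fun t => f t - ∑ i : dyadicPairs L,
      c f i.1.1 i.1.2 * dyadicChi i.1.1 i.1.2 t) =
      fun t => ∑' j, dyadicBlock (j + L) (c f (j + L)) t := funext fun t => by
    rw [congrFun (hfc f hf) t]
    exact tsum_sub_sum_dyadicPairs (hc f hf) hβ L t
  rw [htail]
  refine (eLpNorm_tsum_dyadicBlock_le (hc f hf) hβ L).trans (ENNReal.ofReal_le_ofReal ?_)
  calc ((L : ℝ) + 1) ^ (-β) * (√2)⁻¹ ^ L / (1 - (√2)⁻¹)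
      ≤ Real.log 2 ^ β * Real.log n ^ (-β) * (√2 * (n : ℝ) ^ (-(1 / 2) : ℝ)) / (1 - (√2)⁻¹) := by
        gcongr
        · exact rpow_neg_log_two_succ_le (by linarith) (by omega)
        · exact inv_sqrt_two_pow_log_le (by omega)
    _ = _ := by ring
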